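/- arXiv:2605.11415 — 2 statements merged into one kernel-verified Lean document; each statement's English description precedes it below -/
import Mathlib

section
/- Suppose an unmeasured variable U satisfies the Rosenbaum odds bound: Γ⁻¹ ≤ [pr(A=1|X,U=u)·pr(A=0|X,U=ũ)] / [pr(A=0|X,U=u)·pr(A=1|X,U=ũ)] ≤ Γ for all u, ũ. If r(x) = pr{Y(a) ≤ k | A = 1−a, X = x} and p(x) = pr{Y(a) ≤ k | A = a, X = x}, then r(x) ∈ [r⁻_Γ(p(x)), r⁺_Γ(p(x))] where r⁻_Γ(p) = p/(p+Γ(1−p)) and r⁺_Γ(p) = Γp/(Γp+1−p). As a simplified finite probability version: if W is a {0,1}-valued random variable, A a {0,1}-valued random variable, and U a random variable such that W ⟂ A | U and the conditional odds of A=1 given U=u vary by at most a factor Γ across u (all probabilities in (0,1)), then with p = P(W=1 | A=1), the counterfactual conditional probability P(W=1 | A=0) lies in [p/(p+Γ(1−p)), Γp/(Γp+1−p)]. -/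
/-!
Stratify by `U`, with `a u = P(A = 1, U = u)`, `b u = P(A = 0, U = u)` and `w u = P(W = 1 | U = u)`.
Conditional independence makes `p` and `r = P(W = 1 | A = 0)` the averages of the same `w` under
the weights `a` and `b`, whose likelihood ratio `b / a` varies by a factor at most `Γ`. Expanding
`r (1 - p)` and `p (1 - r)` as double sums over pairs of strata and comparing them term by term
shows that the odds of `r` and of `p` differ by a factor at most `Γ`; solving for `r` gives the bounds.
-/

open scoped Classical

noncomputable def pr {Ω : Type*} [Fintype Ω] (P : Ω → ℝ) (E : Set Ω) : ℝ :=
  ∑ ω, if ω ∈ E then P ω else 0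

noncomputable def cpr {Ω : Type*} [Fintype Ω] (P : Ω → ℝ) (E B : Set Ω) : ℝ :=
  pr P (E ∩ B) / pr P B

open Finset

noncomputable def rosenbaumLower (Γ p : ℝ) : ℝ := p / (p + Γ * (1 - p))

noncomputable def rosenbaumUpper (Γ p : ℝ) : ℝ := Γ * p / (Γ * p + 1 - p)

lemma rosenbaumLower_le {Γ p r : ℝ} (hΓ : 0 < Γ) (hp0 : 0 ≤ p) (hp1 : p ≤ 1)
    (h : p * (1 - r) ≤ Γ * (r * (1 - p))) : rosenbaumLower Γ p ≤ r := by
  have hden : 0 < p + Γ * (1 - p) := by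
    rcases hp0.lt_or_eq with hp | rfl
    · nlinarith
    · linarith
  rw [rosenbaumLower, div_le_iff₀ hden]
  linarith

lemma le_rosenbaumUpper {Γ p r : ℝ} (hΓ : 0 < Γ) (hp0 : 0 ≤ p) (hp1 : p ≤ 1)
    (h : r * (1 - p) ≤ Γ * (p * (1 - r))) : r ≤ rosenbaumUpper Γ p := by
  have hden : 0 < Γ * p + 1 - p := by
    rcases hp1.lt_or_eq with hp | rfl
    · nlinarith
    · linarith
  rw [rosenbaumUpper, le_div_iff₀ hden]
  linarith

noncomputable def weightedMean {ι : Type*} [Fintype ι] (a w : ι → ℝ) : ℝ :=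
  (∑ i, a i * w i) / ∑ i, a i

section WeightedMean

variable {ι : Type*} [Fintype ι] {a b w : ι → ℝ} {Γ : ℝ}

lemma weightedMean_nonneg (ha : ∀ i, 0 ≤ a i) (hw0 : ∀ i, 0 ≤ w i) : 0 ≤ weightedMean a w :=
  div_nonneg (sum_nonneg fun i _ => mul_nonneg (ha i) (hw0 i)) (sum_nonneg fun i _ => ha i)

lemma weightedMean_le_one (ha : ∀ i, 0 ≤ a i) (hw1 : ∀ i, w i ≤ 1) : weightedMean a w ≤ 1 :=
  div_le_one_of_le₀ (sum_le_sum fun i _ => mul_le_of_le_one_right (ha i) (hw1 i))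
    (sum_nonneg fun i _ => ha i)

lemma one_sub_weightedMean (ha : ∑ i, a i ≠ 0) :
    1 - weightedMean a w = weightedMean a (fun i => 1 - w i) := by
  simp only [weightedMean, mul_sub, mul_one, sum_sub_distrib]
  field_simp

lemma sum_mul_sum_one_sub_le (hw0 : ∀ i, 0 ≤ w i) (hw1 : ∀ i, w i ≤ 1)
    (hab : ∀ i j, b i * a j ≤ Γ * (a i * b j)) :
    (∑ i, b i * w i) * ∑ j, a j * (1 - w j) ≤ Γ * ((∑ i, a i * w i) * ∑ j, b j * (1 - w j)) := by
  rw [sum_mul_sum, sum_mul_sum, mul_sum]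
  refine sum_le_sum fun i _ => ?_
  rw [mul_sum]
  refine sum_le_sum fun j _ => ?_
  have hw : 0 ≤ w i * (1 - w j) := mul_nonneg (hw0 i) (sub_nonneg.2 (hw1 j))
  linear_combination w i * (1 - w j) * hab i j

lemma weightedMean_mul_one_sub_le (ha : 0 < ∑ i, a i) (hb : 0 < ∑ i, b i)
    (hw0 : ∀ i, 0 ≤ w i) (hw1 : ∀ i, w i ≤ 1) (hab : ∀ i j, b i * a j ≤ Γ * (a i * b j)) :
    weightedMean b w * (1 - weightedMean a w) ≤ Γ * (weightedMean a w * (1 - weightedMean b w)) := by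
  rw [one_sub_weightedMean ha.ne', one_sub_weightedMean hb.ne']
  unfold weightedMean
  rw [div_mul_div_comm, div_mul_div_comm, mul_comm (∑ i, b i), ← mul_div_assoc]
  exact div_le_div_of_nonneg_right (sum_mul_sum_one_sub_le hw0 hw1 hab) (by positivity)

lemma weightedMean_mem_Icc_rosenbaum [Nonempty ι] (hΓ : 0 < Γ) (ha : ∀ i, 0 < a i)
    (hb : ∀ i, 0 < b i) (hw0 : ∀ i, 0 ≤ w i) (hw1 : ∀ i, w i ≤ 1)
    (hab : ∀ i j, a i * b j ≤ Γ * (b i * a j)) :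
    weightedMean b w ∈
      Set.Icc (rosenbaumLower Γ (weightedMean a w)) (rosenbaumUpper Γ (weightedMean a w)) := by
  have hA : 0 < ∑ i, a i := sum_pos (fun i _ => ha i) univ_nonempty
  have hB : 0 < ∑ i, b i := sum_pos (fun i _ => hb i) univ_nonempty
  have hp0 := weightedMean_nonneg (fun i => (ha i).le) hw0
  have hp1 := weightedMean_le_one (fun i => (ha i).le) hw1
  exact ⟨rosenbaumLower_le hΓ hp0 hp1 (weightedMean_mul_one_sub_le hB hA hw0 hw1 hab),
    le_rosenbaumUpper hΓ hp0 hp1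
      (weightedMean_mul_one_sub_le hA hB hw0 hw1 fun i j => by linear_combination hab j i)⟩

end WeightedMean

section Probability

variable {Ω : Type*} [Fintype Ω] (P : Ω → ℝ)

lemma pr_nonneg (hP : ∀ ω, 0 ≤ P ω) (E : Set Ω) : 0 ≤ pr P E :=
  sum_nonneg fun ω _ => by split_ifs <;> simp [hP ω]

lemma pr_mono (hP : ∀ ω, 0 ≤ P ω) {E F : Set Ω} (h : E ⊆ F) : pr P E ≤ pr P F :=
  sum_le_sum fun ω _ => by
    by_cases hE : ω ∈ E
    · simp [hE, h hE]
    · simp only [hE, if_false]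
      split_ifs <;> simp [hP ω]

lemma pr_inter_add_pr_inter_compl (E F : Set Ω) : pr P (E ∩ F) + pr P (E ∩ Fᶜ) = pr P E := by
  simp only [pr, ← sum_add_distrib]
  refine sum_congr rfl fun ω _ => ?_
  by_cases hE : ω ∈ E <;> by_cases hF : ω ∈ F <;> simp [hE, hF]

lemma pr_eq_sum_pr_inter_fiber {S : Type*} [Fintype S] (U : Ω → S) (E : Set Ω) :
    pr P E = ∑ u, pr P (E ∩ {ω | U ω = u}) := by
  simp only [pr]
  rw [sum_comm]
  refine sum_congr rfl fun ω _ => ?_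
  by_cases hE : ω ∈ E <;> simp [hE]

lemma cpr_nonneg (hP : ∀ ω, 0 ≤ P ω) (E B : Set Ω) : 0 ≤ cpr P E B :=
  div_nonneg (pr_nonneg P hP _) (pr_nonneg P hP _)

lemma cpr_le_one (hP : ∀ ω, 0 ≤ P ω) (E B : Set Ω) : cpr P E B ≤ 1 :=
  div_le_one_of_le₀ (pr_mono P hP Set.inter_subset_right) (pr_nonneg P hP B)

lemma pr_inter_mul_le_of_odds_le {E F B C : Set Ω} {Γ : ℝ} (hB : pr P B ≠ 0) (hC : pr P C ≠ 0)
    (hFE : 0 < pr P (F ∩ B) * pr P (E ∩ C))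
    (h : cpr P E B / cpr P F B * (cpr P F C / cpr P E C) ≤ Γ) :
    pr P (E ∩ B) * pr P (F ∩ C) ≤ Γ * (pr P (F ∩ B) * pr P (E ∩ C)) := by
  simp only [cpr, div_div_div_cancel_right₀ hB, div_div_div_cancel_right₀ hC] at h
  rwa [div_mul_div_comm, div_le_iff₀ hFE] at h

lemma pr_inter_inter_eq_cpr_mul {E F B : Set Ω} (hB : pr P B ≠ 0)
    (hCI : cpr P (E ∩ F) B = cpr P E B * cpr P F B) :
    pr P (E ∩ F ∩ B) = cpr P E B * pr P (F ∩ B) := by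
  unfold cpr at hCI ⊢
  field_simp at hCI ⊢
  linear_combination hCI

lemma pr_inter_compl_inter_eq_cpr_mul {E F B : Set Ω} (hB : pr P B ≠ 0)
    (hCI : cpr P (E ∩ F) B = cpr P E B * cpr P F B) :
    pr P (E ∩ Fᶜ ∩ B) = cpr P E B * pr P (Fᶜ ∩ B) := by
  have hE := pr_inter_add_pr_inter_compl P (E ∩ B) F
  have hB' := pr_inter_add_pr_inter_compl P B F
  rw [Set.inter_right_comm, Set.inter_right_comm E B Fᶜ, pr_inter_inter_eq_cpr_mul P hB hCI] at hE
  rw [Set.inter_comm B, Set.inter_comm B] at hB'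
  have hEB : pr P (E ∩ B) = cpr P E B * pr P B := (div_mul_cancel₀ _ hB).symm
  linear_combination hE + hEB - cpr P E B * hB'

lemma cpr_eq_weightedMean {S : Type*} [Fintype S] (U : Ω → S) {E F : Set Ω} {w : S → ℝ}
    (h : ∀ u, pr P (E ∩ F ∩ {ω | U ω = u}) = w u * pr P (F ∩ {ω | U ω = u})) :
    cpr P E F = weightedMean (fun u => pr P (F ∩ {ω | U ω = u})) w := by
  rw [cpr, weightedMean, pr_eq_sum_pr_inter_fiber P U (E ∩ F), pr_eq_sum_pr_inter_fiber P U F]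
  exact congrArg (· / _) (sum_congr rfl fun u _ => (h u).trans (mul_comm _ _))

end Probability

/-- Rosenbaum-type sensitivity bound (finite probability version).  If `W` and
`A` are conditionally independent given `U`, and the conditional odds of
`A = true` given `U = u` vary by at most a factor `Γ` across values of `u`,
then with `p = P(W = 1 | A = 1)`, the counterfactual conditional probability
`P(W = 1 | A = 0)` lies in `[p/(p + Γ(1−p)), Γp/(Γp + 1−p)]`. -/
theorem rosenbaum_counterfactual_bound {Ω S : Type*} [Fintype Ω] [Fintype S]
    (P : Ω → ℝ) (hP : ∀ ω, 0 ≤ P ω) (hPsum : ∑ ω, P ω = 1)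
    (A W : Ω → Bool) (U : Ω → S) (Γ : ℝ) (hΓ : 1 ≤ Γ)
    (hpos : ∀ u : S, 0 < pr P {ω | A ω = true ∧ U ω = u} ∧
      0 < pr P {ω | A ω = false ∧ U ω = u})
    (hCI : ∀ u : S,
      cpr P ({ω | W ω = true} ∩ {ω | A ω = true}) {ω | U ω = u}
        = cpr P {ω | W ω = true} {ω | U ω = u} *
          cpr P {ω | A ω = true} {ω | U ω = u})
    (hodds : ∀ u v : S,
      Γ⁻¹ ≤ (cpr P {ω | A ω = true} {ω | U ω = u} /
              cpr P {ω | A ω = false} {ω | U ω = u}) *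
            (cpr P {ω | A ω = false} {ω | U ω = v} /
              cpr P {ω | A ω = true} {ω | U ω = v}) ∧
      (cpr P {ω | A ω = true} {ω | U ω = u} /
              cpr P {ω | A ω = false} {ω | U ω = u}) *
            (cpr P {ω | A ω = false} {ω | U ω = v} /
              cpr P {ω | A ω = true} {ω | U ω = v}) ≤ Γ) :
    let p := cpr P {ω | W ω = true} {ω | A ω = true}
    cpr P {ω | W ω = true} {ω | A ω = false} ∈
      Set.Icc (p / (p + Γ * (1 - p))) (Γ * p / (Γ * p + 1 - p)) := by
  intro p
  obtain ⟨ω₀, -, -⟩ := exists_ne_zero_of_sum_ne_zero (hPsum ▸ one_ne_zero : ∑ ω, P ω ≠ 0)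
  have : Nonempty S := ⟨U ω₀⟩
  have hA₀ : {ω | A ω = false} = {ω | A ω = true}ᶜ := by ext; simp
  set a : S → ℝ := fun u => pr P ({ω | A ω = true} ∩ {ω | U ω = u})
  set b : S → ℝ := fun u => pr P ({ω | A ω = false} ∩ {ω | U ω = u})
  set w : S → ℝ := fun u => cpr P {ω | W ω = true} {ω | U ω = u}
  have ha : ∀ u, 0 < a u := fun u => (hpos u).1
  have hb : ∀ u, 0 < b u := fun u => (hpos u).2
  have hU : ∀ u, pr P {ω | U ω = u} ≠ 0 :=
    fun u => ((ha u).trans_le (pr_mono P hP Set.inter_subset_right)).ne'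
  have hp : p = weightedMean a w :=
    cpr_eq_weightedMean P U fun u => pr_inter_inter_eq_cpr_mul P (hU u) (hCI u)
  have hr : cpr P {ω | W ω = true} {ω | A ω = false} = weightedMean b w :=
    cpr_eq_weightedMean P U (F := {ω | A ω = false}) fun u => by
      rw [hA₀]
      exact pr_inter_compl_inter_eq_cpr_mul P (hU u) (hCI u)
  have hab : ∀ u v, a u * b v ≤ Γ * (b u * a v) := fun u v =>
    pr_inter_mul_le_of_odds_le P (hU u) (hU v) (mul_pos (hb u) (ha v)) (hodds u v).2
  rw [hr, hp]
  exact weightedMean_mem_Icc_rosenbaum (one_pos.trans_le hΓ) ha hb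
    (fun u => cpr_nonneg P hP _ _) (fun u => cpr_le_one P hP _ _) hab
end

section
/- Monotonicity of the copula functional ψ in the margins: let C be a copula and ψ(F₁,F₀) = ∑_{k=0}^{L−1} [C(F₁(k),F₀(k−1)) − C(F₁(k−1),F₀(k−1))] with F_a(−1)=0, F_a(L−1)=1, F_a nondecreasing. If G₁ is another nondecreasing margin with G₁(−1)=0, G₁(L−1)=1 and G₁(k) ≥ F₁(k) for all k, then ψ(G₁,F₀) ≤ ψ(F₁,F₀). Similarly, if G₀(k) ≥ F₀(k) for all k, then ψ(F₁,G₀) ≥ ψ(F₁,F₀). -/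
/-- A (bivariate) copula on `[0,1]²`: grounded, uniform margins, 2-increasing. -/
def IsCopula (C : ℝ → ℝ → ℝ) : Prop :=
  (∀ u ∈ Set.Icc (0:ℝ) 1, C u 0 = 0) ∧
  (∀ v ∈ Set.Icc (0:ℝ) 1, C 0 v = 0) ∧
  (∀ u ∈ Set.Icc (0:ℝ) 1, C u 1 = u) ∧
  (∀ v ∈ Set.Icc (0:ℝ) 1, C 1 v = v) ∧
  (∀ u u' v v' : ℝ, 0 ≤ u → u ≤ u' → u' ≤ 1 → 0 ≤ v → v ≤ v' → v' ≤ 1 →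
    0 ≤ C u' v' - C u' v - C u v' + C u v)

/-!
Raising the control margin `F₀` raises every summand of `ψ`, by the 2-increasing property of `C`
applied to the rectangle `[F₁(k-1), F₁(k)] × [F₀(k-1), G₀(k-1)]`.  For the treated margin, summation
by parts rewrites `ψ(H₁, F₀)` as a boundary term, which depends only on `H₁(-1)` and `H₁(L-1)`,
minus the sum of the vertical increments `C(H₁(k), F₀(k)) - C(H₁(k), F₀(k-1))`; these increase with
`H₁(k)`, again by the 2-increasing property.
-/

open Finset

theorem Finset.sum_range_sub_diag {M : Type*} [AddCommGroup M] (f : ℕ → ℕ → M) (n : ℕ) :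
    ∑ k ∈ range n, (f (k + 1) k - f k k)
      = f n n - f 0 0 - ∑ k ∈ range n, (f (k + 1) (k + 1) - f (k + 1) k) := by
  rw [← sum_range_sub (fun k => f k k), ← sum_sub_distrib]
  exact sum_congr rfl fun _ _ => by abel

namespace IsCopula

variable {C : ℝ → ℝ → ℝ}

theorem sub_le_sub_of_le (hC : IsCopula C) {u u' v v' : ℝ} (hu : 0 ≤ u) (huu' : u ≤ u')
    (hu' : u' ≤ 1) (hv : 0 ≤ v) (hvv' : v ≤ v') (hv' : v' ≤ 1) :
    C u' v - C u v ≤ C u' v' - C u v' := by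
  have := hC.2.2.2.2 u u' v v' hu huu' hu' hv hvv' hv'
  linarith

/-- `ψ(H₁, H₀)`, where `H a i` stands for `H_a(i - 1)`. -/
def psi (C : ℝ → ℝ → ℝ) (L : ℕ) (H1 H0 : ℕ → ℝ) : ℝ :=
  ∑ k ∈ range L, (C (H1 (k + 1)) (H0 k) - C (H1 k) (H0 k))

theorem psi_le_psi_of_le_left (hC : IsCopula C) {L : ℕ} {F1 G1 F0 : ℕ → ℝ}
    (hF0 : Monotone F0) (hF1range : ∀ i, F1 i ∈ Set.Icc (0 : ℝ) 1)
    (hG1range : ∀ i, G1 i ∈ Set.Icc (0 : ℝ) 1) (hF0range : ∀ i, F0 i ∈ Set.Icc (0 : ℝ) 1)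
    (h0 : F1 0 = G1 0) (hL : F1 L = G1 L) (hle : ∀ i, F1 i ≤ G1 i) :
    psi C L G1 F0 ≤ psi C L F1 F0 := by
  unfold psi
  rw [sum_range_sub_diag (fun i j => C (G1 i) (F0 j)),
    sum_range_sub_diag (fun i j => C (F1 i) (F0 j)), h0, hL]
  refine sub_le_sub_left (sum_le_sum fun k _ => ?_) _
  have := hC.sub_le_sub_of_le (hF1range (k + 1)).1 (hle (k + 1)) (hG1range (k + 1)).2
    (hF0range k).1 (hF0 k.le_succ) (hF0range (k + 1)).2
  linarith

theorem psi_le_psi_of_le_right (hC : IsCopula C) {L : ℕ} {F1 F0 G0 : ℕ → ℝ}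
    (hF1 : Monotone F1) (hF1range : ∀ i, F1 i ∈ Set.Icc (0 : ℝ) 1)
    (hF0range : ∀ i, F0 i ∈ Set.Icc (0 : ℝ) 1) (hG0range : ∀ i, G0 i ∈ Set.Icc (0 : ℝ) 1)
    (hle : ∀ i, F0 i ≤ G0 i) :
    psi C L F1 F0 ≤ psi C L F1 G0 :=
  sum_le_sum fun k _ => hC.sub_le_sub_of_le (hF1range _).1 (hF1 k.le_succ) (hF1range _).2
    (hF0range _).1 (hle k) (hG0range _).2

end IsCopula

theorem psi_monotone_in_margins_general (C : ℝ → ℝ → ℝ) (hC : IsCopula C) (L : ℕ)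
    (F1 F0 G1 G0 : ℕ → ℝ)
    (hF1mono : Monotone F1) (hF0mono : Monotone F0)
    (hF1range : ∀ i, F1 i ∈ Set.Icc (0:ℝ) 1)
    (hF0range : ∀ i, F0 i ∈ Set.Icc (0:ℝ) 1)
    (hG1range : ∀ i, G1 i ∈ Set.Icc (0:ℝ) 1)
    (hG0range : ∀ i, G0 i ∈ Set.Icc (0:ℝ) 1)
    (hF10 : F1 0 = 0) (hF1L : F1 L = 1)
    (hG10 : G1 0 = 0) (hG1L : G1 L = 1) :
    let ψ : (ℕ → ℝ) → (ℕ → ℝ) → ℝ := fun H1 H0 =>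
      ∑ k ∈ Finset.range L, (C (H1 (k+1)) (H0 k) - C (H1 k) (H0 k))
    ((∀ i, F1 i ≤ G1 i) → ψ G1 F0 ≤ ψ F1 F0) ∧
    ((∀ i, F0 i ≤ G0 i) → ψ F1 F0 ≤ ψ F1 G0) :=
  ⟨hC.psi_le_psi_of_le_left hF0mono hF1range hG1range hF0range (hF10.trans hG10.symm)
      (hF1L.trans hG1L.symm),
    hC.psi_le_psi_of_le_right hF1mono hF1range hF0range hG0range⟩

/-- Monotonicity of `ψ(F₁,F₀) = ∑_{k=0}^{L−1} [C(F₁(k),F₀(k−1)) − C(F₁(k−1),F₀(k−1))]`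
in the margins: raising the treated margin pointwise decreases `ψ`, and raising
the control margin pointwise increases `ψ`.  Indexing convention: `F a i`
represents `F_a(i − 1)`, so `F a 0 = F_a(−1) = 0` and `F a L = F_a(L−1) = 1`. -/
theorem psi_monotone_in_margins (C : ℝ → ℝ → ℝ) (hC : IsCopula C) (L : ℕ)
    (F1 F0 G1 G0 : ℕ → ℝ)
    (hF1mono : Monotone F1) (hF0mono : Monotone F0)
    (hG1mono : Monotone G1) (hG0mono : Monotone G0)
    (hF1range : ∀ i, F1 i ∈ Set.Icc (0:ℝ) 1)
    (hF0range : ∀ i, F0 i ∈ Set.Icc (0:ℝ) 1)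
    (hG1range : ∀ i, G1 i ∈ Set.Icc (0:ℝ) 1)
    (hG0range : ∀ i, G0 i ∈ Set.Icc (0:ℝ) 1)
    (hF10 : F1 0 = 0) (hF00 : F0 0 = 0) (hF1L : F1 L = 1) (hF0L : F0 L = 1)
    (hG10 : G1 0 = 0) (hG00 : G0 0 = 0) (hG1L : G1 L = 1) (hG0L : G0 L = 1) :
    let ψ : (ℕ → ℝ) → (ℕ → ℝ) → ℝ := fun H1 H0 =>
      ∑ k ∈ Finset.range L, (C (H1 (k+1)) (H0 k) - C (H1 k) (H0 k))
    ((∀ i, F1 i ≤ G1 i) → ψ G1 F0 ≤ ψ F1 F0) ∧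
    ((∀ i, F0 i ≤ G0 i) → ψ F1 F0 ≤ ψ F1 G0) :=
  psi_monotone_in_margins_general C hC L F1 F0 G1 G0 hF1mono hF0mono hF1range hF0range hG1range
    hG0range hF10 hF1L hG10 hG1L
end
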